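/- The (n+1)-ary Koszul bracket satisfies the higher Leibniz rule b_{n+1}(f e^{(1)}, e^{(2)},…,e^{(n+1)}) = f b_{n+1}(e^{(1)},…,e^{(n+1)}) + R(df, e^{(2)},…,e^{(n+1)}) e^{(1)} for every smooth function f; equivalently the correction term equals (−1)^n (L_{R(e^{(2)}∧…∧e^{(n+1)})} f) e^{(1)}. -/

import Mathlib

open scoped BigOperators

noncomputable section

/-- Points of the local chart. -/
abbrev Pt (d : ℕ) := Fin d → ℝ

/-- Partial derivative `∂_i f` at `x`. -/
def pd {d : ℕ} (i : Fin d) (f : Pt d → ℝ) (x : Pt d) : ℝ :=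
  fderiv ℝ f x (Pi.single i 1)

/-- Lie derivative of a 1-form `e` along a vector field `X`:
`(L_X e)_μ = X^ν ∂_ν e_μ + e_ν ∂_μ X^ν`. -/
def lieD {d : ℕ} (X e : Pt d → Fin d → ℝ) : Pt d → Fin d → ℝ :=
  fun x μ => ∑ ν, (X x ν * pd ν (fun y => e y μ) x + e x ν * pd μ (fun y => X y ν) x)

/-- Action of a vector field on a function, `X f = X^ν ∂_ν f`. -/
def act {d : ℕ} (X : Pt d → Fin d → ℝ) (f : Pt d → ℝ) (x : Pt d) : ℝ :=
  ∑ ν, X x ν * pd ν f x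

/-- The vector field `Π(e)`, `(Π(e))^ν = Π^{μν} e_μ`. -/
def sharp {d : ℕ} (P : Pt d → Fin d → Fin d → ℝ) (e : Pt d → Fin d → ℝ) :
    Pt d → Fin d → ℝ :=
  fun x ν => ∑ μ, P x μ ν * e x μ

/-- Full contraction `Π(e,e') = Π^{μν} e_μ e'_ν`. -/
def pairP {d : ℕ} (P : Pt d → Fin d → Fin d → ℝ) (e e' : Pt d → Fin d → ℝ) :
    Pt d → ℝ :=
  fun x => ∑ μ, ∑ ν, P x μ ν * e x μ * e' x ν

/-- The Koszul bracket `b₂(e,e') = L_{Π(e)}e' − L_{Π(e')}e − d(Π(e,e'))`. -/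
def kb {d : ℕ} (P : Pt d → Fin d → Fin d → ℝ) (e e' : Pt d → Fin d → ℝ) :
    Pt d → Fin d → ℝ :=
  fun x μ => lieD (sharp P e) e' x μ - lieD (sharp P e') e x μ - pd μ (pairP P e e') x

/-- Interior product with the de Rham differential: `(ι_X de)_μ = X^ν(∂_ν e_μ − ∂_μ e_ν)`. -/
def iotaD {d : ℕ} (X e : Pt d → Fin d → ℝ) : Pt d → Fin d → ℝ :=
  fun x μ => ∑ ν, X x ν * (pd ν (fun y => e y μ) x - pd μ (fun y => e y ν) x)

/-- The de Rham differential of a function, as a 1-form. -/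
def dF {d : ℕ} (f : Pt d → ℝ) : Pt d → Fin d → ℝ := fun x μ => pd μ f x

/-- The anchor map of the `(n+1)`-vector `R` on decomposable `n`-forms:
`R(e₁∧…∧eₙ)^ν = R^{μ₁…μₙν} e₁_{μ₁}…eₙ_{μₙ}`. -/
def Rc {d n : ℕ} (R : Pt d → (Fin (n+1) → Fin d) → ℝ)
    (f : Fin n → (Pt d → Fin d → ℝ)) : Pt d → Fin d → ℝ :=
  fun x ν => ∑ μ : Fin n → Fin d, R x (Fin.snoc μ ν) * ∏ i, f i x (μ i)

/-- Full contraction `R(e^{(1)},…,e^{(n+1)}) = R^{μ₁…μ_{n+1}} e^{(1)}_{μ₁}…e^{(n+1)}_{μ_{n+1}}`. -/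
def Rfull {d n : ℕ} (R : Pt d → (Fin (n+1) → Fin d) → ℝ)
    (e : Fin (n+1) → (Pt d → Fin d → ℝ)) : Pt d → ℝ :=
  fun x => ∑ μ : Fin (n+1) → Fin d, R x μ * ∏ i, e i x (μ i)

/-- Total antisymmetry of the component functions of a multivector field. -/
def Antisym {d m : ℕ} (R : Pt d → (Fin m → Fin d) → ℝ) : Prop :=
  ∀ (x : Pt d) (σ : Equiv.Perm (Fin m)) (μ : Fin m → Fin d),
    R x (μ ∘ σ) = ((Equiv.Perm.sign σ : ℤ) : ℝ) * R x μ

/-- Smoothness of (the components of) a 1-form. -/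
def SmForm {d : ℕ} (e : Pt d → Fin d → ℝ) : Prop := ∀ μ, ContDiff ℝ (⊤ : ℕ∞) (fun x => e x μ)

/-- Smoothness of the components of a multivector field. -/
def SmMV {d m : ℕ} (R : Pt d → (Fin m → Fin d) → ℝ) : Prop :=
  ∀ μ, ContDiff ℝ (⊤ : ℕ∞) (fun x => R x μ)

/-- The `(n+1)`-ary Koszul bracket of the `(n+1)`-vector `R` (Lie-derivative form),
`b_{n+1}(e^{(1)},…,e^{(n+1)}) = Σ_r (−1)^{n−r+1} L_{R(ê[r])} e^{(r)} − d(R(e^{(1)},…,e^{(n+1)}))`,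
where the contraction `R(e^{(1)},…,e^{(n+1)})` in the exact term carries the
normalization making the bracket consistent for all `n` (it reduces to the usual
Koszul bracket for `n = 1`). -/
def bKos {d n : ℕ} (R : Pt d → (Fin (n+1) → Fin d) → ℝ)
    (e : Fin (n+1) → (Pt d → Fin d → ℝ)) : Pt d → Fin d → ℝ :=
  fun x μ =>
    (∑ r : Fin (n+1), (-1 : ℝ) ^ (n + r.val) * lieD (Rc R (e ∘ r.succAbove)) (e r) x μ)
      - (n : ℝ) * pd μ (Rfull R e) x

/-! ### Auxiliary lemmas -/

section aux
variable {d n : ℕ}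

lemma pd_mul (i : Fin d) (f g : Pt d → ℝ) (x : Pt d)
    (hf : DifferentiableAt ℝ f x) (hg : DifferentiableAt ℝ g x) :
    pd i (fun y => f y * g y) x = f x * pd i g x + g x * pd i f x := by
  unfold pd
  rw [fderiv_fun_mul hf hg]
  simp

lemma diffAt_prod {ι : Type*} [DecidableEq ι] (s : Finset ι) (g : ι → Pt d → ℝ) (x : Pt d)
    (h : ∀ i ∈ s, DifferentiableAt ℝ (g i) x) :
    DifferentiableAt ℝ (fun y => ∏ i ∈ s, g i y) x := by
  classical
  induction s using Finset.induction_on with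
  | empty =>
    simp only [Finset.prod_empty]
    exact differentiableAt_const (1:ℝ)
  | @insert a s ha ih =>
    simp only [Finset.prod_insert ha]
    exact (h a (Finset.mem_insert_self a s)).mul
      (ih fun i hi => h i (Finset.mem_insert_of_mem hi))

lemma diffAt_Rc (R : Pt d → (Fin (n+1) → Fin d) → ℝ) (hRsm : SmMV R)
    (h : Fin n → (Pt d → Fin d → ℝ)) (hh : ∀ i, SmForm (h i)) (ν : Fin d) (x : Pt d) :
    DifferentiableAt ℝ (fun y => Rc R h y ν) x := by
  unfold Rc
  refine DifferentiableAt.fun_sum fun μ _ => DifferentiableAt.mul ?_ ?_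
  · exact ((hRsm _).differentiable (by simp)).differentiableAt
  · exact diffAt_prod _ _ _ fun i _ => ((hh i _).differentiable (by simp)).differentiableAt

lemma diffAt_Rfull (R : Pt d → (Fin (n+1) → Fin d) → ℝ) (hRsm : SmMV R)
    (h : Fin (n+1) → (Pt d → Fin d → ℝ)) (hh : ∀ i, SmForm (h i)) (x : Pt d) :
    DifferentiableAt ℝ (fun y => Rfull R h y) x := by
  unfold Rfull
  refine DifferentiableAt.fun_sum fun μ _ => DifferentiableAt.mul ?_ ?_
  · exact ((hRsm _).differentiable (by simp)).differentiableAt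
  · exact diffAt_prod _ _ _ fun i _ => ((hh i _).differentiable (by simp)).differentiableAt

lemma lieD_scale_form (X e0 : Pt d → Fin d → ℝ) (f : Pt d → ℝ) (x : Pt d) (μ : Fin d)
    (hf : DifferentiableAt ℝ f x) (he : ∀ ν, DifferentiableAt ℝ (fun y => e0 y ν) x) :
    lieD X (fun y ν => f y * e0 y ν) x μ
      = f x * lieD X e0 x μ + act X f x * e0 x μ := by
  unfold lieD act
  rw [Finset.mul_sum, Finset.sum_mul, ← Finset.sum_add_distrib]
  refine Finset.sum_congr rfl fun ν _ => ?_
  rw [pd_mul _ _ _ _ hf (he μ)]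
  ring

lemma lieD_scale_vec (X e' : Pt d → Fin d → ℝ) (f : Pt d → ℝ) (x : Pt d) (μ : Fin d)
    (hf : DifferentiableAt ℝ f x) (hX : ∀ ν, DifferentiableAt ℝ (fun y => X y ν) x) :
    lieD (fun y ν => f y * X y ν) e' x μ
      = f x * lieD X e' x μ + pd μ f x * ∑ ν, e' x ν * X x ν := by
  unfold lieD
  rw [Finset.mul_sum, Finset.mul_sum, ← Finset.sum_add_distrib]
  refine Finset.sum_congr rfl fun ν _ => ?_
  rw [pd_mul _ _ _ _ hf (hX ν)]
  ring

/-- The cycle sending `last` to `r` and `castSucc i` to `r.succAbove i`. -/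
def sigmaPerm (r : Fin (n+1)) : Equiv.Perm (Fin (n+1)) :=
  (Fin.revPerm.trans (Fin.cycleRange r.rev).symm).trans Fin.revPerm

lemma sigmaPerm_last (r : Fin (n+1)) : sigmaPerm r (Fin.last n) = r := by
  simp [sigmaPerm, Fin.rev_last]

lemma sigmaPerm_castSucc (r : Fin (n+1)) (i : Fin n) :
    sigmaPerm r (Fin.castSucc i) = r.succAbove i := by
  simp only [sigmaPerm, Equiv.trans_apply, Fin.revPerm_apply, Fin.rev_castSucc,
    Fin.cycleRange_symm_succ]
  rw [← Fin.rev_succAbove, Fin.rev_rev]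

lemma sign_sigmaPerm (r : Fin (n+1)) :
    ((Equiv.Perm.sign (sigmaPerm r) : ℤ) : ℝ) = (-1 : ℝ) ^ (n + r.val) := by
  have h1 : sigmaPerm r = Fin.revPerm * ((Fin.cycleRange r.rev).symm * Fin.revPerm) := rfl
  have h2 : Equiv.Perm.sign (sigmaPerm r) = Equiv.Perm.sign (Fin.cycleRange r.rev) := by
    rw [h1, map_mul, map_mul, Equiv.Perm.sign_symm]
    rw [mul_comm (Equiv.Perm.sign Fin.revPerm), mul_assoc, Int.units_mul_self, mul_one]
  rw [h2, Fin.sign_cycleRange]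
  have hval : (r.rev : ℕ) = n - r.val := by
    have := Fin.val_rev r
    omega
  have hcast : (((((-1 : ℤˣ)) ^ (r.rev : ℕ) : ℤˣ) : ℤ) : ℝ) = (-1 : ℝ) ^ (r.rev : ℕ) := by
    push_cast
    simp
  have hle : r.val ≤ n := Fin.is_le r
  rw [hcast, hval, show n + r.val = (n - r.val) + 2 * r.val by omega, pow_add, pow_mul]
  simp

/-- `(ν, μ) ↦ snoc μ ν` as an equivalence. -/
def snocEquiv (d : ℕ) {n : ℕ} : (Fin d × (Fin n → Fin d)) ≃ (Fin (n+1) → Fin d) where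
  toFun p := Fin.snoc p.2 p.1
  invFun κ := (κ (Fin.last n), fun i => κ (Fin.castSucc i))
  left_inv p := by simp
  right_inv κ := by
    funext j
    refine Fin.lastCases ?_ (fun i => ?_) j <;> simp

/-- The key contraction identity `⟨g r, R(g∘r.succAbove)⟩ = (-1)^(n+r) R(g)`. -/
lemma contract (R : Pt d → (Fin (n+1) → Fin d) → ℝ) (hR : Antisym R)
    (g : Fin (n+1) → (Pt d → Fin d → ℝ)) (r : Fin (n+1)) (x : Pt d) :
    ∑ ν, g r x ν * Rc R (g ∘ r.succAbove) x ν = (-1 : ℝ) ^ (n + r.val) * Rfull R g x := by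
  classical
  set σ := sigmaPerm r with hσ
  have step1 : ∑ ν, g r x ν * Rc R (g ∘ r.succAbove) x ν
      = ∑ κ : Fin (n+1) → Fin d, R x κ * ∏ i, g (σ i) x (κ i) := by
    have heq := Fintype.sum_equiv (snocEquiv d)
      (fun p : Fin d × (Fin n → Fin d) =>
        R x (Fin.snoc p.2 p.1)
          * ∏ i : Fin (n+1), g (σ i) x ((Fin.snoc p.2 p.1 : Fin (n+1) → Fin d) i))
      (fun κ : Fin (n+1) → Fin d => R x κ * ∏ i, g (σ i) x (κ i))
      (fun p => rfl)
    rw [← heq, Fintype.sum_prod_type]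
    unfold Rc
    simp only [Finset.mul_sum]
    refine Finset.sum_congr rfl fun ν _ => Finset.sum_congr rfl fun μ _ => ?_
    rw [Fin.prod_univ_castSucc]
    simp only [hσ, Fin.snoc_castSucc, Fin.snoc_last, sigmaPerm_castSucc, sigmaPerm_last,
      Function.comp_apply]
    ring
  have step2 : ∑ κ : Fin (n+1) → Fin d, R x κ * ∏ i, g (σ i) x (κ i)
      = ((Equiv.Perm.sign σ : ℤ) : ℝ) * Rfull R g x := by
    unfold Rfull
    rw [Finset.mul_sum]
    refine (Fintype.sum_equiv (Equiv.arrowCongr σ.symm (Equiv.refl (Fin d))) _ _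
      fun κ => ?_).symm
    have he : (Equiv.arrowCongr σ.symm (Equiv.refl (Fin d))) κ = κ ∘ σ := rfl
    rw [he, hR x σ κ]
    have hp : ∏ i, g (σ i) x ((κ ∘ σ) i) = ∏ i, g i x (κ i) :=
      Equiv.prod_comp σ (fun j => g j x (κ j))
    rw [hp]
    ring
  rw [step1, step2, hσ, sign_sigmaPerm]

lemma update_comp_zero_succAbove (e : Fin (n+1) → (Pt d → Fin d → ℝ))
    (g : Pt d → Fin d → ℝ) :
    (Function.update e 0 g) ∘ (0 : Fin (n+1)).succAbove = e ∘ (0 : Fin (n+1)).succAbove := by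
  funext i
  simp only [Function.comp_apply, Fin.zero_succAbove]
  exact Function.update_of_ne (Fin.succ_ne_zero i) _ _

lemma Rc_update_scale (hn : 1 ≤ n) (R : Pt d → (Fin (n+1) → Fin d) → ℝ)
    (e : Fin (n+1) → (Pt d → Fin d → ℝ)) (f : Pt d → ℝ)
    (r : Fin (n+1)) (hr : r ≠ 0) (x : Pt d) (ν : Fin d) :
    Rc R ((Function.update e 0 (fun y κ => f y * e 0 y κ)) ∘ r.succAbove) x ν
      = f x * Rc R (e ∘ r.succAbove) x ν := by
  classical
  set i₀ : Fin n := ⟨0, hn⟩ with hi₀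
  have hcs : Fin.castSucc i₀ = (0 : Fin (n+1)) := by
    apply Fin.ext
    simp [hi₀]
  have h₀ : r.succAbove i₀ = 0 := by
    rw [Fin.succAbove_of_castSucc_lt r i₀ (by rw [hcs]; exact Fin.pos_of_ne_zero hr), hcs]
  have hne : ∀ i : Fin n, i ≠ i₀ → r.succAbove i ≠ 0 := by
    intro i hi hcon
    exact hi (Fin.succAbove_right_injective (by rw [h₀, hcon]))
  unfold Rc
  rw [Finset.mul_sum]
  refine Finset.sum_congr rfl fun μ _ => ?_
  have hprod : ∀ h : Fin (n+1) → (Pt d → Fin d → ℝ),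
      ∏ i, (h ∘ r.succAbove) i x (μ i)
        = (h ∘ r.succAbove) i₀ x (μ i₀)
            * ∏ i ∈ Finset.univ.erase i₀, (h ∘ r.succAbove) i x (μ i) := fun h =>
    (Finset.mul_prod_erase Finset.univ _ (Finset.mem_univ i₀)).symm
  rw [hprod, hprod]
  have herase : ∏ i ∈ Finset.univ.erase i₀,
      ((Function.update e 0 (fun y κ => f y * e 0 y κ)) ∘ r.succAbove) i x (μ i)
        = ∏ i ∈ Finset.univ.erase i₀, (e ∘ r.succAbove) i x (μ i) := by
    refine Finset.prod_congr rfl fun i hi => ?_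
    have hiz : r.succAbove i ≠ 0 := hne i (Finset.ne_of_mem_erase hi)
    simp [Function.update_of_ne hiz]
  rw [herase]
  simp only [Function.comp_apply, h₀, Function.update_self]
  ring

lemma Rfull_update_scale (R : Pt d → (Fin (n+1) → Fin d) → ℝ)
    (e : Fin (n+1) → (Pt d → Fin d → ℝ)) (f : Pt d → ℝ) (x : Pt d) :
    Rfull R (Function.update e 0 (fun y κ => f y * e 0 y κ)) x = f x * Rfull R e x := by
  classical
  unfold Rfull
  rw [Finset.mul_sum]
  refine Finset.sum_congr rfl fun μ _ => ?_
  have hprod : ∀ h : Fin (n+1) → (Pt d → Fin d → ℝ),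
      ∏ i, h i x (μ i)
        = h 0 x (μ 0) * ∏ i ∈ Finset.univ.erase 0, h i x (μ i) := fun h =>
    (Finset.mul_prod_erase Finset.univ _ (Finset.mem_univ 0)).symm
  rw [hprod, hprod]
  have herase : ∏ i ∈ Finset.univ.erase (0 : Fin (n+1)),
      (Function.update e 0 (fun y κ => f y * e 0 y κ)) i x (μ i)
        = ∏ i ∈ Finset.univ.erase (0 : Fin (n+1)), e i x (μ i) := by
    refine Finset.prod_congr rfl fun i hi => ?_
    simp [Function.update_of_ne (Finset.ne_of_mem_erase hi)]
  rw [herase, Function.update_self]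
  ring

end aux

/-- the `(n+1)`-ary Koszul bracket satisfies the higher Leibniz rule
`b_{n+1}(f e^{(1)}, e^{(2)},…,e^{(n+1)}) = f b_{n+1}(e^{(1)},…,e^{(n+1)}) + R(df, e^{(2)},…,e^{(n+1)}) e^{(1)}`,
and the correction term equals `(−1)^n (L_{R(e^{(2)}∧…∧e^{(n+1)})} f) e^{(1)}`. -/
theorem higher_koszul_leibniz {d n : ℕ} (hn : 1 ≤ n)
    (R : Pt d → (Fin (n+1) → Fin d) → ℝ)
    (hR : Antisym R) (hRsm : SmMV R)
    (e : Fin (n+1) → (Pt d → Fin d → ℝ)) (he : ∀ i, SmForm (e i))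
    (f : Pt d → ℝ) (hf : ContDiff ℝ (⊤ : ℕ∞) f) :
    (∀ (x : Pt d) (μ : Fin d),
      bKos R (Function.update e 0 (fun y ν => f y * e 0 y ν)) x μ
        = f x * bKos R e x μ + Rfull R (Function.update e 0 (dF f)) x * e 0 x μ)
    ∧ (∀ x : Pt d,
        Rfull R (Function.update e 0 (dF f)) x
          = (-1 : ℝ) ^ n * act (Rc R (e ∘ (0 : Fin (n+1)).succAbove)) f x) := by
  classical
  have hn0 : 0 < n := hn
  -- Part 2
  have part2 : ∀ x : Pt d,
      Rfull R (Function.update e 0 (dF f)) x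
        = (-1 : ℝ) ^ n * act (Rc R (e ∘ (0 : Fin (n+1)).succAbove)) f x := by
    intro x
    have h0 := contract R hR (Function.update e 0 (dF f)) 0 x
    rw [update_comp_zero_succAbove] at h0
    have hact : act (Rc R (e ∘ (0 : Fin (n+1)).succAbove)) f x
        = ∑ ν, (Function.update e 0 (dF f)) 0 x ν * Rc R (e ∘ (0 : Fin (n+1)).succAbove) x ν := by
      unfold act
      refine Finset.sum_congr rfl fun ν _ => ?_
      simp [dF, mul_comm]
    rw [hact, h0]
    simp only [Fin.val_zero, Nat.add_zero]
    rw [← mul_assoc, ← pow_add, show n + n = 2 * n by ring, pow_mul]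
    simp
  refine ⟨?_, part2⟩
  intro x μ
  set E := Function.update e 0 (fun y ν => f y * e 0 y ν) with hEdef
  have hdf : DifferentiableAt ℝ f x := (hf.differentiable (by simp)).differentiableAt
  -- term-by-term computation of the lieD sum
  have hterm : ∀ r : Fin (n+1),
      (-1 : ℝ) ^ (n + r.val) * lieD (Rc R (E ∘ r.succAbove)) (E r) x μ
        = f x * ((-1 : ℝ) ^ (n + r.val) * lieD (Rc R (e ∘ r.succAbove)) (e r) x μ)
          + (if r = 0 then (-1 : ℝ) ^ n * act (Rc R (e ∘ (0 : Fin (n+1)).succAbove)) f x * e 0 x μ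
             else pd μ f x * Rfull R e x) := by
    intro r
    by_cases hr : r = 0
    · subst hr
      rw [if_pos rfl]
      have hcomp : E ∘ (0 : Fin (n+1)).succAbove = e ∘ (0 : Fin (n+1)).succAbove :=
        update_comp_zero_succAbove e _
      have hE0 : E 0 = fun y ν => f y * e 0 y ν := Function.update_self _ _ _
      rw [hcomp, hE0, lieD_scale_form _ _ _ _ _ hdf
        (fun ν => ((he 0 ν).differentiable (by simp)).differentiableAt)]
      simp only [Fin.val_zero, Nat.add_zero]
      ring
    · rw [if_neg hr]
      have hEr : E r = e r := Function.update_of_ne hr _ _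
      have hcomp : Rc R (E ∘ r.succAbove) = fun y ν => f y * Rc R (e ∘ r.succAbove) y ν := by
        funext y ν
        exact Rc_update_scale hn R e f r hr y ν
      rw [hEr, hcomp, lieD_scale_vec (Rc R (e ∘ r.succAbove)) (e r) f x μ hdf
        (fun ν => diffAt_Rc R hRsm (e ∘ r.succAbove) (fun i => he _) ν x)]
      rw [contract R hR e r x]
      have hsq : (-1:ℝ) ^ (n + r.val) * (-1:ℝ) ^ (n + r.val) = 1 := by
        rw [← pow_add, show (n + r.val) + (n + r.val) = 2 * (n + r.val) by ring, pow_mul]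
        simp
      linear_combination pd μ f x * Rfull R e x * hsq
  -- pd of the scaled Rfull
  have hRf : pd μ (Rfull R E) x
      = f x * pd μ (Rfull R e) x + Rfull R e x * pd μ f x := by
    have hfun : Rfull R E = fun y => f y * Rfull R e y := by
      funext y
      exact Rfull_update_scale R e f y
    rw [hfun, pd_mul _ _ _ _ hdf (diffAt_Rfull R hRsm e he x)]
  unfold bKos
  have hsum : ∑ r : Fin (n+1), (-1 : ℝ) ^ (n + r.val) * lieD (Rc R (E ∘ r.succAbove)) (E r) x μ
      = f x * (∑ r : Fin (n+1), (-1 : ℝ) ^ (n + r.val) * lieD (Rc R (e ∘ r.succAbove)) (e r) x μ)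
        + ((-1 : ℝ) ^ n * act (Rc R (e ∘ (0 : Fin (n+1)).succAbove)) f x * e 0 x μ
            + (n : ℝ) * (pd μ f x * Rfull R e x)) := by
    rw [Finset.sum_congr rfl fun r _ => hterm r, Finset.sum_add_distrib, ← Finset.mul_sum]
    congr 1
    set A := (-1 : ℝ) ^ n * act (Rc R (e ∘ (0 : Fin (n+1)).succAbove)) f x * e 0 x μ with hA
    set B := pd μ f x * Rfull R e x with hB
    have hsplit : ∀ r : Fin (n+1), (if r = 0 then A else B)
        = B + (if r = 0 then A - B else 0) := by
      intro r
      split <;> ring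
    rw [Finset.sum_congr rfl fun r _ => hsplit r, Finset.sum_add_distrib,
      Finset.sum_const, Finset.sum_ite_eq' Finset.univ (0 : Fin (n+1)) (fun _ => A - B)]
    simp only [Finset.mem_univ, if_true, Finset.card_univ, Fintype.card_fin, nsmul_eq_mul]
    push_cast
    ring
  rw [hsum, hRf, part2 x]
  ring
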